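/- arXiv:0705.1521 — 4 statements merged into one kernel-verified Lean document; each statement's English description precedes it below -/
import Mathlib

section
/- The complement of K₃,₃ minus an edge (co-(K₃,₃−e)) is not module-composed. -/
open scoped Classical

/-- `M` is a module (homogeneous set) of `G`: every two vertices of `M`
have the same neighbours outside `M`. -/
def SimpleGraph.IsModule {V : Type*} (G : SimpleGraph V) (M : Set V) : Prop :=
  ∀ v₁ ∈ M, ∀ v₂ ∈ M, ∀ w ∉ M, (G.Adj v₁ w ↔ G.Adj v₂ w)

/-- `G` is module-composed: there is a linear ordering `v₀, …, v_{n-1}` of the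
vertices such that for every `i ≥ 1` the neighbourhood of `vᵢ` inside the
induced subgraph on `{v₀, …, v_{i-1}}` is a module of that induced subgraph. -/
def SimpleGraph.ModuleComposed {V : Type*} [Fintype V] (G : SimpleGraph V) : Prop :=
  ∃ e : Fin (Fintype.card V) ≃ V,
    ∀ i : Fin (Fintype.card V), 0 < (i : ℕ) →
      (G.induce {v | ∃ j, j < i ∧ e j = v}).IsModule
        {w : {v | ∃ j, j < i ∧ e j = v} | G.Adj (e i) ↑w}


/-- `K₃,₃ − e`: the complete bipartite graph with parts `{0,1,2}` and
`{3,4,5}`, minus the edge `{0,3}`. -/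
def K33MinusEdge : SimpleGraph (Fin 6) :=
  SimpleGraph.fromRel (fun a b =>
    (a : ℕ) < 3 ∧ 3 ≤ (b : ℕ) ∧ ¬((a : ℕ) = 0 ∧ (b : ℕ) = 3))

/-! The last vertex of a module-composed ordering sees a module of the rest of the graph. In
co-(K₃,₃−e), two triangles `{0,1,2}`, `{3,4,5}` joined by the edge `03`, no vertex does: each
neighbourhood contains two vertices that a third vertex outside it distinguishes. -/

namespace SimpleGraph

variable {V : Type*} {G : SimpleGraph V}

theorem not_isModule_induce_compl_singleton {v a b c : V} (ha : G.Adj v a) (hb : G.Adj v b)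
    (hc : ¬ G.Adj v c) (hcv : c ≠ v) (hac : G.Adj a c) (hbc : ¬ G.Adj b c) :
    ¬ (G.induce {v}ᶜ).IsModule {w : ↥({v}ᶜ : Set V) | G.Adj v w} := fun h =>
  hbc <| (h ⟨a, ha.ne'⟩ ha ⟨b, hb.ne'⟩ hb ⟨c, hcv⟩ hc).1 hac

theorem ModuleComposed.exists_isModule_induce_compl_singleton [Fintype V] [Nontrivial V]
    (hG : G.ModuleComposed) :
    ∃ v, (G.induce {v}ᶜ).IsModule {w : ↥({v}ᶜ : Set V) | G.Adj v w} := by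
  obtain ⟨e, he⟩ := hG
  have hcard : 1 < Fintype.card V := Fintype.one_lt_card
  let last : Fin (Fintype.card V) := ⟨Fintype.card V - 1, by omega⟩
  have hprefix : {u | ∃ j, j < last ∧ e j = u} = {e last}ᶜ := by
    ext u
    refine ⟨?_, fun hu => ⟨e.symm u, ?_, e.apply_symm_apply u⟩⟩
    · rintro ⟨j, hj, rfl⟩ h
      exact hj.ne (e.injective h)
    · have hne : e.symm u ≠ last := fun h => hu (by rw [← h, e.apply_symm_apply]; rfl)
      exact lt_of_le_of_ne (Fin.le_def.2 (Nat.le_sub_one_of_lt (e.symm u).isLt)) hne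
  refine ⟨e last, ?_⟩
  have h := he last (by simp only [last]; omega)
  rwa [hprefix] at h

end SimpleGraph

open SimpleGraph in
theorem compl_K33MinusEdge_not_isModule_induce_compl_singleton (v : Fin 6) :
    ¬ (K33MinusEdgeᶜ.induce {v}ᶜ).IsModule
      {w : ↥({v}ᶜ : Set (Fin 6)) | K33MinusEdgeᶜ.Adj v w} := by
  fin_cases v
  · refine not_isModule_induce_compl_singleton (a := 3) (b := 1) (c := 4) ?_ ?_ ?_ ?_ ?_ ?_ <;>
      simp [K33MinusEdge]
  · refine not_isModule_induce_compl_singleton (a := 0) (b := 2) (c := 3) ?_ ?_ ?_ ?_ ?_ ?_ <;>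
      simp [K33MinusEdge]
  · refine not_isModule_induce_compl_singleton (a := 0) (b := 1) (c := 3) ?_ ?_ ?_ ?_ ?_ ?_ <;>
      simp [K33MinusEdge]
  · refine not_isModule_induce_compl_singleton (a := 0) (b := 4) (c := 1) ?_ ?_ ?_ ?_ ?_ ?_ <;>
      simp [K33MinusEdge]
  · refine not_isModule_induce_compl_singleton (a := 3) (b := 5) (c := 0) ?_ ?_ ?_ ?_ ?_ ?_ <;>
      simp [K33MinusEdge]
  · refine not_isModule_induce_compl_singleton (a := 3) (b := 4) (c := 0) ?_ ?_ ?_ ?_ ?_ ?_ <;>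
      simp [K33MinusEdge]

/-- The complement of `K₃,₃ − e` is not module-composed. -/
theorem co_K33MinusEdge_not_moduleComposed : ¬ K33MinusEdgeᶜ.ModuleComposed := fun h =>
  let ⟨v, hv⟩ := h.exists_isModule_induce_compl_singleton
  compl_K33MinusEdge_not_isModule_induce_compl_singleton v hv
end

section
/- Every graph containing no induced P₄ and no induced co-2C₄ is module-composed. -/
open scoped Classical

/-- The disjoint union of two 4-cycles, on vertices `0,…,7`. -/
def twoC4 : SimpleGraph (Fin 8) :=
  SimpleGraph.fromRel (fun a b =>
    (a, b) ∈ [((0 : Fin 8), (1 : Fin 8)), (1, 2), (2, 3), (3, 0),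
              (4, 5), (5, 6), (6, 7), (7, 4)])

/-!
By Seinsche's theorem, if `G` is P₄-free and `S` has at least two vertices, then `G[S]` or
`Gᶜ[S]` is disconnected. It suffices to find in every nonempty `S` a vertex `v` whose
neighbourhood is a module of `G[S \ {v}]`: peeling such vertices off one at a time and reversing
gives the ordering. Such a vertex of a component of `G[S]` also works for `S`. If `Gᶜ[S]` is
disconnected, each of its components is completely joined in `G` to the rest of `S`, and as
co-2C₄ is excluded, one of them, `C`, contains no induced C₄ of `Gᶜ`. Being connected and free of
induced P₄ and C₄, `Gᶜ[C]` has a dominating vertex `v`; then `v` is isolated in `G[C]`, and its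
neighbourhood `S \ C` is a module.
-/

open SimpleGraph

theorem exists_injective_forall_image_Iic {V : Type*} (P : Set V → V → Prop)
    (hP : ∀ S : Set V, S.Nonempty → ∃ v ∈ S, P S v) (n : ℕ) (S : Finset V) (hS : S.card = n) :
    ∃ f : Fin n → V, Function.Injective f ∧ Set.range f = S ∧ ∀ i, P (f '' Set.Iic i) (f i) := by
  induction n generalizing S with
  | zero =>
    refine ⟨Fin.elim0, Function.injective_of_subsingleton _, ?_, fun i => i.elim0⟩
    simp [Finset.card_eq_zero.mp hS]
  | succ n ih =>
    obtain ⟨v, hvS, hv⟩ := hP S (by simp [← Finset.card_pos, hS])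
    obtain ⟨f, hf, hrange, hprefix⟩ :=
      ih (S.erase v) (by rw [Finset.card_erase_of_mem hvS, hS, Nat.add_sub_cancel])
    have hrange' : Set.range (Fin.snoc f v : Fin (n + 1) → V) = S := by
      rw [Fin.range_snoc, hrange, Finset.coe_erase, Set.insert_sdiff_singleton,
        Set.insert_eq_of_mem hvS]
    refine ⟨Fin.snoc f v, Fin.snoc_injective_of_injective hf (by simp [hrange]), hrange',
      fun i => ?_⟩
    induction i using Fin.lastCases with
    | last => rwa [Fin.snoc_last, ← Fin.top_eq_last, Set.Iic_top, Set.image_univ, hrange']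
    | cast i =>
      rw [← Fin.image_castSucc_Iic, ← Set.image_comp, Fin.snoc_comp_castSucc, Fin.snoc_castSucc]
      exact hprefix i

namespace SimpleGraph

variable {V W : Type*}

theorem isIndContained_of_adj_of_compl_adj {A : SimpleGraph W} {G : SimpleGraph V} (f : W → V)
    (hadj : ∀ i j, A.Adj i j → G.Adj (f i) (f j))
    (hnadj : ∀ i j, i ≠ j → ¬A.Adj i j → Gᶜ.Adj (f i) (f j)) : A ⊴ G := by
  have hinj : Function.Injective f := by
    intro i j hij
    by_contra hne
    by_cases h : A.Adj i j
    · exact (hadj i j h).ne hij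
    · exact (hnadj i j hne h).ne hij
  refine ⟨⟨⟨f, hinj⟩, fun {i j} => ⟨fun h => ?_, hadj i j⟩⟩⟩
  by_contra hA
  exact (hnadj i j (fun hij => h.ne (congrArg f hij)) hA).2 h

variable {G H : SimpleGraph V}

theorem pathGraph_four_isIndContained {a b c d : V}
    (hab : G.Adj a b) (hbc : G.Adj b c) (hcd : G.Adj c d)
    (hac : ¬G.Adj a c) (had : ¬G.Adj a d) (hbd : ¬G.Adj b d) : pathGraph 4 ⊴ G := by
  have hac' : a ≠ c := by rintro rfl; exact had hcd
  have had' : a ≠ d := by rintro rfl; exact hac hcd.symm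
  have hbd' : b ≠ d := by rintro rfl; exact had hab
  refine isIndContained_of_adj_of_compl_adj ![a, b, c, d] ?_ ?_
  · intro i j h
    fin_cases i <;> fin_cases j <;> simp_all [pathGraph_adj, G.adj_comm]
  · intro i j hij h
    fin_cases i <;> fin_cases j <;> simp_all [pathGraph_adj, G.adj_comm, eq_comm]

theorem pathGraph_four_isIndContained_of_compl (h : pathGraph 4 ⊴ Gᶜ) : pathGraph 4 ⊴ G := by
  have hself : pathGraph 4 ⊴ (pathGraph 4)ᶜ :=
    isIndContained_of_adj_of_compl_adj ![1, 3, 0, 2] (by simp [pathGraph_adj]; decide)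
      (by simp [pathGraph_adj]; decide)
  simpa using hself.trans h.compl

def IsInducedC4 (H : SimpleGraph V) (a b c d : V) : Prop :=
  H.Adj a b ∧ H.Adj b c ∧ H.Adj c d ∧ H.Adj d a ∧ Hᶜ.Adj a c ∧ Hᶜ.Adj b d

def HasInducedC4In (H : SimpleGraph V) (C : Set V) : Prop :=
  ∃ a ∈ C, ∃ b ∈ C, ∃ c ∈ C, ∃ d ∈ C, H.IsInducedC4 a b c d

theorem compl_twoC4_isIndContained {A B : Set V}
    (hA : Gᶜ.HasInducedC4In A) (hB : Gᶜ.HasInducedC4In B)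
    (hAB : ∀ x ∈ A, ∀ y ∈ B, G.Adj x y) : twoC4ᶜ ⊴ G := by
  obtain ⟨a, ha, b, hb, c, hc, d, hd, hab, hbc, hcd, hda, hac, hbd⟩ := hA
  obtain ⟨a', ha', b', hb', c', hc', d', hd', hab', hbc', hcd', hda', hac', hbd'⟩ := hB
  rw [compl_compl] at hac hbd hac' hbd'
  suffices twoC4 ⊴ Gᶜ by simpa using this.compl
  refine isIndContained_of_adj_of_compl_adj ![a, b, c, d, a', b', c', d'] ?_ ?_
  · intro i j h
    fin_cases i <;> fin_cases j <;> simp [twoC4] at h <;>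
      first | assumption | exact (by assumption : Gᶜ.Adj _ _).symm
  · intro i j hij h
    rw [compl_compl]
    fin_cases i <;> fin_cases j <;> simp [twoC4] at hij h <;>
      first
        | assumption | exact (by assumption : G.Adj _ _).symm
        | exact hAB _ ‹_› _ ‹_› | exact (hAB _ ‹_› _ ‹_›).symm

def ReachableIn (H : SimpleGraph V) (S : Set V) : V → V → Prop :=
  Relation.ReflTransGen fun x y => x ∈ S ∧ y ∈ S ∧ H.Adj x y

def ConnectedOn (H : SimpleGraph V) (S : Set V) : Prop :=
  ∀ x ∈ S, ∀ y ∈ S, H.ReachableIn S x y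

def componentIn (H : SimpleGraph V) (S : Set V) (a : V) : Set V :=
  {x | x ∈ S ∧ H.ReachableIn S a x}

variable {S C : Set V} {a c u v x y z : V}

theorem ReachableIn.refl : H.ReachableIn S x x := Relation.ReflTransGen.refl

theorem ReachableIn.tail (h : H.ReachableIn S x y) (hy : y ∈ S) (hz : z ∈ S)
    (hyz : H.Adj y z) : H.ReachableIn S x z :=
  Relation.ReflTransGen.tail h ⟨hy, hz, hyz⟩

theorem ReachableIn.trans (hxy : H.ReachableIn S x y) (hyz : H.ReachableIn S y z) :
    H.ReachableIn S x z :=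
  Relation.ReflTransGen.trans hxy hyz

theorem ReachableIn.symm (h : H.ReachableIn S x y) : H.ReachableIn S y x := by
  induction h with
  | refl => exact .refl
  | tail _ hbc ih => exact .head ⟨hbc.2.1, hbc.1, hbc.2.2.symm⟩ ih

theorem ReachableIn.exists_adj_of_not {p : V → Prop} (h : H.ReachableIn S x y) (hx : p x)
    (hy : ¬p y) : ∃ x₁ x₂, x₁ ∈ S ∧ x₂ ∈ S ∧ H.Adj x₁ x₂ ∧ p x₁ ∧ ¬p x₂ ∧
      H.ReachableIn S x x₁ ∧ H.ReachableIn S x x₂ := by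
  induction h with
  | refl => exact absurd hx hy
  | @tail b c hxb hbc ih =>
    by_cases hb : p b
    · exact ⟨b, c, hbc.1, hbc.2.1, hbc.2.2, hb, hy, hxb,
        ReachableIn.tail hxb hbc.1 hbc.2.1 hbc.2.2⟩
    · exact ih hb

theorem ReachableIn.eq_or_exists_adj (h : H.ReachableIn S v x) :
    x = v ∨ ∃ n ∈ S \ {v}, H.Adj v n ∧ H.ReachableIn (S \ {v}) n x := by
  induction h with
  | refl => exact Or.inl rfl
  | @tail b c _ hbc ih =>
    obtain ⟨hb, hc, hbc⟩ := hbc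
    by_cases hcv : c = v
    · exact Or.inl hcv
    by_cases hbv : b = v
    · subst hbv
      exact Or.inr ⟨c, ⟨hc, hcv⟩, hbc, .refl⟩
    rcases ih with hbv' | ⟨n, hn, hvn, hnb⟩
    · exact absurd hbv' hbv
    · exact Or.inr ⟨n, hn, hvn, hnb.tail ⟨hb, hbv⟩ ⟨hc, hcv⟩ hbc⟩

theorem ConnectedOn.exists_adj (h : H.ConnectedOn S) (hv : v ∈ S) (hz : z ∈ S) (hzv : z ≠ v) :
    ∃ w ∈ S, w ≠ v ∧ H.Adj v w := by
  rcases (h v hv z hz).eq_or_exists_adj with hzv' | ⟨n, hn, hvn, -⟩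
  · exact absurd hzv' hzv
  · exact ⟨n, hn.1, hn.2, hvn⟩

theorem mem_componentIn_self (ha : a ∈ S) : a ∈ H.componentIn S a := ⟨ha, .refl⟩

theorem componentIn_subset : H.componentIn S a ⊆ S := fun _ hx => hx.1

theorem mem_componentIn_of_adj (hx : x ∈ H.componentIn S a) (hy : y ∈ S) (hxy : H.Adj x y) :
    y ∈ H.componentIn S a :=
  ⟨hy, hx.2.tail hx.1 hy hxy⟩

theorem connectedOn_componentIn : H.ConnectedOn (H.componentIn S a) := by
  have hreach : ∀ {x}, H.ReachableIn S a x → H.ReachableIn (H.componentIn S a) a x := by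
    intro x h
    induction h with
    | refl => exact .refl
    | @tail b c hab hbc ih =>
      exact ih.tail ⟨hbc.1, hab⟩ ⟨hbc.2.1, Relation.ReflTransGen.tail hab hbc⟩ hbc.2.2
  exact fun x hx y hy => (hreach hx.2).symm.trans (hreach hy.2)

theorem adj_of_mem_compl_componentIn (hx : x ∈ Hᶜ.componentIn S a) (hy : y ∈ S)
    (hy' : y ∉ Hᶜ.componentIn S a) : H.Adj x y := by
  by_contra hxy
  exact hy' (mem_componentIn_of_adj hx hy ⟨fun h => hy' (h ▸ hx), hxy⟩)

theorem pathGraph_four_isIndContained_of_separated (h : H.ConnectedOn S) (hv : v ∈ S)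
    (hu : u ∈ S) (hvu : Hᶜ.Adj v u) (hc : c ∈ S \ {v})
    (hsep : ¬H.ReachableIn (S \ {v}) u c) : pathGraph 4 ⊴ H := by
  -- On a path from a neighbour of `v` to `u` avoiding `v` there is an edge `x₁x₂` with
  -- `x₁ ∼ v ≁ x₂`; for a neighbour `n₂` of `v` on the side of `c`, `x₂ x₁ v n₂` is an induced P₄.
  rcases (h v hv u hu).eq_or_exists_adj with rfl | ⟨n₁, -, hvn₁, hn₁u⟩
  · exact absurd rfl hvu.ne
  rcases (h v hv c hc.1).eq_or_exists_adj with hcv | ⟨n₂, hn₂, hvn₂, hn₂c⟩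
  · exact absurd hcv hc.2
  obtain ⟨x₁, x₂, hx₁, hx₂, hx₁₂, hvx₁, hvx₂, hn₁x₁, hn₁x₂⟩ :=
    hn₁u.exists_adj_of_not (p := H.Adj v) hvn₁ hvu.2
  have hn₂ : ∀ x ∈ S \ {v}, H.ReachableIn (S \ {v}) n₁ x → ¬H.Adj x n₂ :=
    fun x hx hn₁x hxn₂ => hsep (hn₁u.symm.trans ((hn₁x.tail hx hn₂ hxn₂).trans hn₂c))
  exact pathGraph_four_isIndContained hx₁₂.symm hvx₁.symm hvn₂ (fun h => hvx₂ h.symm)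
    (hn₂ x₂ hx₂ hn₁x₂) (hn₂ x₁ hx₁ hn₁x₁)

theorem connectedOn_diff_singleton (hP : ¬pathGraph 4 ⊴ H) (h : H.ConnectedOn S)
    (hc : Hᶜ.ConnectedOn S) (hv : v ∈ S) : H.ConnectedOn (S \ {v}) := by
  intro a ha b hb
  by_contra hab
  obtain ⟨u, hu, huv, hvu⟩ := hc.exists_adj hv ha.1 ha.2
  by_cases hua : H.ReachableIn (S \ {v}) u a
  · exact hP (pathGraph_four_isIndContained_of_separated h hv hu hvu hb
      fun hub => hab (hua.symm.trans hub))
  · exact hP (pathGraph_four_isIndContained_of_separated h hv hu hvu ha hua)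

theorem subsingleton_of_connectedOn_of_connectedOn_compl [Finite V] (hP : ¬pathGraph 4 ⊴ H)
    (h : H.ConnectedOn S) (hc : Hᶜ.ConnectedOn S) : S.Subsingleton := by
  induction hn : S.ncard using Nat.strong_induction_on generalizing S with
  | _ n ih =>
  intro x hx v hv
  by_contra hxv
  have hPc : ¬pathGraph 4 ⊴ Hᶜ := fun h => hP (pathGraph_four_isIndContained_of_compl h)
  have hsub : (S \ {v}).Subsingleton :=
    ih _ (hn ▸ Set.ncard_sdiff_singleton_lt_of_mem hv) (connectedOn_diff_singleton hP h hc hv)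
      (connectedOn_diff_singleton hPc hc (by rwa [compl_compl]) hv) rfl
  obtain ⟨w, hw, hwv, hvw⟩ := h.exists_adj hv hx hxv
  obtain ⟨w', hw', hw'v, hvw'⟩ := hc.exists_adj hv hx hxv
  exact hvw'.2 (hsub ⟨hw, hwv⟩ ⟨hw', hw'v⟩ ▸ hvw)

theorem exists_forall_adj_of_connectedOn [Finite V] (hP : ¬pathGraph 4 ⊴ H)
    (h : H.ConnectedOn C) (hC4 : ¬H.HasInducedC4In C) (hne : C.Nonempty) :
    ∃ v ∈ C, ∀ w ∈ C, w ≠ v → H.Adj v w := by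
  obtain ⟨a₀, ha₀⟩ := hne
  by_cases hsub : C.Subsingleton
  · exact ⟨a₀, ha₀, fun w hw hwa => absurd (hsub hw ha₀) hwa⟩
  have hc : ¬Hᶜ.ConnectedOn C :=
    fun hc => hsub (subsingleton_of_connectedOn_of_connectedOn_compl hP h hc)
  simp only [ConnectedOn, not_forall] at hc
  obtain ⟨a, ha, b, hb, hab⟩ := hc
  -- `C` splits into `K ∋ a` and `C \ K ∋ b`, completely joined in `H`; non-neighbours of `a` and
  -- of `b` would span an induced C₄.
  by_contra! hnd
  set K := Hᶜ.componentIn C a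
  have haK : a ∈ K := mem_componentIn_self ha
  have hbK : b ∉ K := fun h => hab h.2
  obtain ⟨w, hw, hwa, haw⟩ := hnd a ha
  have hwK : w ∈ K := by_contra fun h => haw (adj_of_mem_compl_componentIn haK hw h)
  obtain ⟨w', hw', hw'b, hbw'⟩ := hnd b hb
  have hw'K : w' ∉ K := fun h => hbw' (adj_of_mem_compl_componentIn h hb hbK).symm
  exact hC4 ⟨a, ha, b, hb, w, hw, w', hw', adj_of_mem_compl_componentIn haK hb hbK,
    (adj_of_mem_compl_componentIn hwK hb hbK).symm, adj_of_mem_compl_componentIn hwK hw' hw'K,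
    (adj_of_mem_compl_componentIn haK hw' hw'K).symm, ⟨hwa.symm, haw⟩, ⟨hw'b.symm, hbw'⟩⟩

def NeighborSetIsModuleIn (G : SimpleGraph V) (S : Set V) (v : V) : Prop :=
  ∀ x ∈ S, ∀ y ∈ S, ∀ w ∈ S, w ≠ v → G.Adj v x → G.Adj v y → ¬G.Adj v w →
    (G.Adj x w ↔ G.Adj y w)

theorem NeighborSetIsModuleIn.of_componentIn (hv : v ∈ G.componentIn S a)
    (h : G.NeighborSetIsModuleIn (G.componentIn S a) v) : G.NeighborSetIsModuleIn S v := by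
  intro x hx y hy w hw hwv hvx hvy hvw
  have hxK := mem_componentIn_of_adj hv hx hvx
  have hyK := mem_componentIn_of_adj hv hy hvy
  by_cases hwK : w ∈ G.componentIn S a
  · exact h x hxK y hyK w hwK hwv hvx hvy hvw
  · exact iff_of_false (fun hxw => hwK (mem_componentIn_of_adj hxK hw hxw))
      (fun hyw => hwK (mem_componentIn_of_adj hyK hw hyw))

theorem exists_neighborSetIsModuleIn_of_compl_componentIn [Finite V] (hP : ¬pathGraph 4 ⊴ G)
    (ha : a ∈ S) (hC4 : ¬Gᶜ.HasInducedC4In (Gᶜ.componentIn S a)) :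
    ∃ v ∈ S, G.NeighborSetIsModuleIn S v := by
  obtain ⟨v, hv, hdom⟩ := exists_forall_adj_of_connectedOn
    (fun h => hP (pathGraph_four_isIndContained_of_compl h)) connectedOn_componentIn hC4
    ⟨a, mem_componentIn_self ha⟩
  have hNK : ∀ x, G.Adj v x → x ∉ Gᶜ.componentIn S a :=
    fun x hvx hx => (hdom x hx hvx.ne').2 hvx
  refine ⟨v, hv.1, fun x hx y hy w hw _ hvx hvy hvw => ?_⟩
  have hwK : w ∈ Gᶜ.componentIn S a :=
    by_contra fun h => hvw (adj_of_mem_compl_componentIn hv hw h)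
  exact iff_of_true (adj_of_mem_compl_componentIn hwK hx (hNK x hvx)).symm
    (adj_of_mem_compl_componentIn hwK hy (hNK y hvy)).symm

theorem exists_neighborSetIsModuleIn [Finite V] (hP : ¬pathGraph 4 ⊴ G) (hQ : ¬twoC4ᶜ ⊴ G)
    (hS : S.Nonempty) : ∃ v ∈ S, G.NeighborSetIsModuleIn S v := by
  induction hn : S.ncard using Nat.strong_induction_on generalizing S with
  | _ n ih =>
  by_cases hc : Gᶜ.ConnectedOn S
  · by_cases hconn : G.ConnectedOn S
    · obtain ⟨a, ha⟩ := hS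
      exact ⟨a, ha, fun _ _ _ _ w hw hwa => absurd
        (subsingleton_of_connectedOn_of_connectedOn_compl hP hconn hc hw ha) hwa⟩
    simp only [ConnectedOn, not_forall] at hconn
    obtain ⟨a, ha, b, hb, hab⟩ := hconn
    have hlt : (G.componentIn S a).ncard < n :=
      hn ▸ Set.ncard_lt_ncard ⟨componentIn_subset, fun h => hab (h hb).2⟩
    obtain ⟨v, hv, hmod⟩ := ih _ hlt ⟨a, mem_componentIn_self ha⟩ rfl
    exact ⟨v, hv.1, hmod.of_componentIn hv⟩
  simp only [ConnectedOn, not_forall] at hc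
  obtain ⟨a, ha, b, hb, hab⟩ := hc
  by_cases ha4 : Gᶜ.HasInducedC4In (Gᶜ.componentIn S a)
  · by_cases hb4 : Gᶜ.HasInducedC4In (Gᶜ.componentIn S b)
    · refine absurd (compl_twoC4_isIndContained ha4 hb4 fun x hx y hy => ?_) hQ
      exact adj_of_mem_compl_componentIn hx hy.1 fun hy' => hab (hy'.2.trans hy.2.symm)
    · exact exists_neighborSetIsModuleIn_of_compl_componentIn hP hb hb4
  · exact exists_neighborSetIsModuleIn_of_compl_componentIn hP ha ha4

theorem moduleComposed_of_forall_exists [Fintype V]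
    (h : ∀ S : Set V, S.Nonempty → ∃ v ∈ S, G.NeighborSetIsModuleIn S v) : G.ModuleComposed := by
  obtain ⟨f, hf, -, hprefix⟩ :=
    exists_injective_forall_image_Iic _ h (Fintype.card V) Finset.univ Finset.card_univ
  have hbij : Function.Bijective f :=
    (Fintype.bijective_iff_injective_and_card f).2 ⟨hf, Fintype.card_fin _⟩
  refine ⟨Equiv.ofBijective f hbij, fun i _ x hx y hy w hw => ?_⟩
  have hmem : ∀ z : {v | ∃ j, j < i ∧ f j = v}, (z : V) ∈ f '' Set.Iic i :=
    fun z => let ⟨j, hj, hjz⟩ := z.2; ⟨j, hj.le, hjz⟩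
  obtain ⟨j, hj, hjw⟩ := w.2
  exact hprefix i x (hmem x) y (hmem y) w (hmem w) (fun h => hj.ne (hf (hjw.trans h))) hx hy hw

end SimpleGraph

/-- Every graph with no induced `P₄` and no induced co-2C₄ is module-composed. -/
theorem p4_co2C4_free_moduleComposed {V : Type*} [Fintype V] (G : SimpleGraph V)
    (hP4 : ¬ ∃ _f : SimpleGraph.pathGraph 4 ↪g G, True)
    (hco2C4 : ¬ ∃ _f : twoC4ᶜ ↪g G, True) :
    G.ModuleComposed :=
  G.moduleComposed_of_forall_exists fun _ hS =>
    exists_neighborSetIsModuleIn (fun ⟨f⟩ => hP4 ⟨f, trivial⟩) (fun ⟨f⟩ => hco2C4 ⟨f, trivial⟩) hS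
end

section
/- Every module-composed graph is HHD-free, i.e. contains no induced house, no induced hole (chordless cycle of length ≥ 5), and no induced domino. -/
open scoped Classical

/-- The house graph: a 5-cycle with one chord between two vertices at
distance two on the cycle. -/
def house : SimpleGraph (Fin 5) :=
  SimpleGraph.fromRel (fun a b =>
    (a, b) ∈ [((0 : Fin 5), (1 : Fin 5)), (1, 2), (2, 3), (3, 4), (4, 0), (1, 4)])

/-- The domino graph: a 6-cycle with one chord joining opposite vertices. -/
def domino : SimpleGraph (Fin 6) :=
  SimpleGraph.fromRel (fun a b =>
    (a, b) ∈ [((0 : Fin 6), (1 : Fin 6)), (1, 2), (2, 3), (3, 4), (4, 5), (5, 0), (0, 3)])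

/-!
Take an induced copy of `H` in a module-composed graph and let `x` be the vertex of the copy
that comes last in the composition ordering. All other vertices of the copy come earlier, and
modules pull back along induced embeddings, so the neighbourhood of `x` is a module of `H - x`.
No vertex of the house, the domino or a hole has this property.
-/

namespace SimpleGraph

variable {V W : Type*}

theorem IsModule.comap {G : SimpleGraph V} {M : Set V} (hM : G.IsModule M) (φ : W → V) :
    (G.comap φ).IsModule (φ ⁻¹' M) :=
  fun _ h₁ _ h₂ _ hw => hM _ h₁ _ h₂ _ hw

def IsModularVertex (H : SimpleGraph W) (x : W) : Prop :=
  (H.induce {x}ᶜ).IsModule {y | H.Adj x y}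

theorem isModularVertex_iff {H : SimpleGraph W} {x : W} :
    H.IsModularVertex x ↔ ∀ y₁ y₂ w, H.Adj x y₁ → H.Adj x y₂ → w ≠ x → ¬H.Adj x w →
      (H.Adj y₁ w ↔ H.Adj y₂ w) := by
  unfold IsModularVertex IsModule
  constructor
  · intro h y₁ y₂ w h₁ h₂ hwx hw
    exact h ⟨y₁, h₁.ne'⟩ h₁ ⟨y₂, h₂.ne'⟩ h₂ ⟨w, hwx⟩ hw
  · rintro h ⟨y₁, _⟩ h₁ ⟨y₂, _⟩ h₂ ⟨w, hwx⟩ hw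
    exact h y₁ y₂ w h₁ h₂ hwx hw

theorem ModuleComposed.exists_isModularVertex [Fintype V] [Nonempty W] {G : SimpleGraph V}
    {H : SimpleGraph W} (hG : G.ModuleComposed) (f : H ↪g G) : ∃ x, H.IsModularVertex x := by
  obtain ⟨e, he⟩ := hG
  let idx : W → Fin (Fintype.card V) := fun y => e.symm (f y)
  have idx_injective : Function.Injective idx := e.symm.injective.comp f.injective
  have : Finite W := Finite.of_injective idx idx_injective
  obtain ⟨x, hx⟩ := Finite.exists_max idx
  refine ⟨x, ?_⟩
  have hlt (y : ({x}ᶜ : Set W)) : idx y < idx x :=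
    (hx y).lt_of_ne fun h => y.2 (idx_injective h)
  rcases Nat.eq_zero_or_pos (idx x) with h0 | hpos
  · exact fun y => absurd (hlt y) (by simp [Fin.lt_def, h0])
  · unfold IsModularVertex
    let φ : ({x}ᶜ : Set W) → {v | ∃ j, j < idx x ∧ e j = v} :=
      fun y => ⟨f y, idx y, hlt y, e.apply_symm_apply _⟩
    convert (he (idx x) hpos).comap φ using 1
    · ext; simp [φ]
    · ext; simp [φ, idx]

theorem ModuleComposed.isEmpty_embedding [Fintype V] [Nonempty W] {G : SimpleGraph V}
    {H : SimpleGraph W} (hG : G.ModuleComposed) (hH : ∀ x, ¬H.IsModularVertex x) :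
    IsEmpty (H ↪g G) :=
  ⟨fun f => (hG.exists_isModularVertex f).elim hH⟩

theorem cycleGraph_adj_iff_sub {n : ℕ} {u v : Fin (n + 2)} :
    (cycleGraph (n + 2)).Adj u v ↔ v - u = 1 ∨ v - u = -1 := by
  rw [cycleGraph_adj, ← neg_sub v u, neg_eq_iff_eq_neg, or_comm]

open Fin.CommRing in
theorem cycleGraph_not_isModularVertex {n : ℕ} (hn : 5 ≤ n) (x : Fin n) :
    ¬(cycleGraph n).IsModularVertex x := by
  obtain ⟨m, rfl⟩ : ∃ m, n = m + 5 := ⟨n - 5, by omega⟩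
  have h2 : (2 : Fin (m + 5)) ≠ 0 := by simp [Fin.ext_iff, Nat.mod_eq_of_lt]
  have h3 : (3 : Fin (m + 5)) ≠ 0 := by simp [Fin.ext_iff, Nat.mod_eq_of_lt]
  have h4 : (4 : Fin (m + 5)) ≠ 0 := by simp [Fin.ext_iff, Nat.mod_eq_of_lt]
  have hx1 : x + 1 - x = 1 := by ring
  have hx1' : x - 1 - x = -1 := by ring
  have hx2 : x + 2 - x = 2 := by ring
  have hx21 : x + 2 - (x + 1) = 1 := by ring
  have hx21' : x + 2 - (x - 1) = 3 := by ring
  rw [isModularVertex_iff]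
  intro h
  -- `x + 2` is adjacent to `x + 1` but not to `x - 1`, as `3 ≠ ±1` once `n ≥ 5`
  have := h (x + 1) (x - 1) (x + 2)
  simp only [cycleGraph_adj_iff_sub, hx1, hx1', hx2, hx21, hx21'] at this
  simp only [← sub_eq_zero (b := (-1 : Fin _)), ← sub_eq_zero (b := (1 : Fin _)),
    sub_neg_eq_add] at this
  norm_num at this
  exact (this h2 h3).elim h2 h4

end SimpleGraph

instance : DecidableRel house.Adj := fun a b =>
  decidable_of_iff _ (SimpleGraph.fromRel_adj _ a b).symm

instance : DecidableRel domino.Adj := fun a b =>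
  decidable_of_iff _ (SimpleGraph.fromRel_adj _ a b).symm

open SimpleGraph

theorem house_not_isModularVertex (x : Fin 5) : ¬house.IsModularVertex x := by
  rw [isModularVertex_iff]
  revert x
  decide

theorem domino_not_isModularVertex (x : Fin 6) : ¬domino.IsModularVertex x := by
  rw [isModularVertex_iff]
  revert x
  decide

/-- Every module-composed graph is HHD-free: it contains no induced house,
no induced hole (chordless cycle on at least 5 vertices), and no induced
domino. -/
theorem moduleComposed_HHD_free {V : Type*} [Fintype V] (G : SimpleGraph V)
    (hG : G.ModuleComposed) :
    (¬ ∃ _f : house ↪g G, True) ∧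
    (∀ n, 5 ≤ n → ¬ ∃ _f : SimpleGraph.cycleGraph n ↪g G, True) ∧
    (¬ ∃ _f : domino ↪g G, True) := by
  refine ⟨fun ⟨f, _⟩ => ?_, fun n hn ⟨f, _⟩ => ?_, fun ⟨f, _⟩ => ?_⟩
  · exact (hG.isEmpty_embedding house_not_isModularVertex).false f
  · have : NeZero n := ⟨by omega⟩
    exact (hG.isEmpty_embedding (cycleGraph_not_isModularVertex hn)).false f
  · exact (hG.isEmpty_embedding domino_not_isModularVertex).false f
end

section
/- No complete k-sun (k ≥ 3) is module-composed. -/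
/-!
In a module-composed ordering, the neighbourhood of the last vertex `v` is a module of `G - v`.
In the complete `k`-sun this fails for every `v`: if `v = uⱼ`, its neighbours `u_{j+1}` and `wⱼ`
disagree on the non-neighbour `w_{j+1}`; if `v = wⱼ`, its neighbours `u_{j+1}` and `uⱼ` disagree
on `w_{j+1}`, because `uⱼ` and `w_{j+1}` are non-adjacent once `k ≥ 3`.
-/

open scoped Classical

/-- The complete `k`-sun: a clique `u₀,…,u_{k-1}` (the `Sum.inl` vertices)
together with an independent set `w₀,…,w_{k-1}` (the `Sum.inr` vertices),
where `wⱼ` is adjacent to `uᵢ` iff `i = j` or `i = j + 1 (mod k)`. -/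
def completeSun (k : ℕ) : SimpleGraph (Fin k ⊕ Fin k) where
  Adj x y :=
    match x, y with
    | .inl i, .inl j => i ≠ j
    | .inl i, .inr j => (i : ℕ) = (j : ℕ) ∨ (i : ℕ) = ((j : ℕ) + 1) % k
    | .inr j, .inl i => (i : ℕ) = (j : ℕ) ∨ (i : ℕ) = ((j : ℕ) + 1) % k
    | .inr _, .inr _ => False
  symm := ⟨by rintro (i | i) (j | j) h <;> simp_all <;> omega⟩
  loopless := ⟨by rintro (i | i) h <;> simp_all⟩

namespace SimpleGraph

variable {V : Type*} {G : SimpleGraph V}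

theorem IsModule.adj_iff_of_induce_compl {v a b c : V}
    (h : (G.induce {v}ᶜ).IsModule {w | G.Adj v w}) (hc : c ≠ v)
    (ha : G.Adj v a) (hb : G.Adj v b) (hvc : ¬ G.Adj v c) :
    G.Adj a c ↔ G.Adj b c :=
  h ⟨a, ha.ne'⟩ ha ⟨b, hb.ne'⟩ hb ⟨c, hc⟩ hvc

theorem ModuleComposed.exists_isModule_induce_compl [Fintype V] (h : G.ModuleComposed)
    (hV : 2 ≤ Fintype.card V) : ∃ v, (G.induce {v}ᶜ).IsModule {w | G.Adj v w} := by
  obtain ⟨e, he⟩ := h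
  let last : Fin (Fintype.card V) := ⟨Fintype.card V - 1, by omega⟩
  have hprefix : {v | ∃ j, j < last ∧ e j = v} = {e last}ᶜ := by
    ext v
    simp only [Set.mem_ofPred_eq, Set.mem_compl_singleton_iff]
    constructor
    · rintro ⟨j, hj, rfl⟩
      exact e.injective.ne hj.ne
    · intro hv
      refine ⟨e.symm v, ?_, e.apply_symm_apply v⟩
      have hne : e.symm v ≠ last := fun h => hv (by rw [← h, e.apply_symm_apply])
      exact lt_of_le_of_ne (Fin.le_def.mpr (by simp only [last]; omega)) hne
  exact ⟨e last, hprefix ▸ he last (by simp only [last]; omega)⟩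

end SimpleGraph

namespace completeSun

variable {k : ℕ}

def succMod (j : Fin k) : Fin k := ⟨(j + 1) % k, Nat.mod_lt _ j.pos⟩

theorem val_succMod (j : Fin k) :
    (succMod j : ℕ) = if (j : ℕ) + 1 = k then 0 else (j : ℕ) + 1 := by
  split_ifs with h
  · simp only [succMod, h, Nat.mod_self]
  · exact Nat.mod_eq_of_lt (by omega)

theorem succMod_ne (hk : 2 ≤ k) (j : Fin k) : succMod j ≠ j := by
  rw [Ne, Fin.ext_iff, val_succMod]
  split_ifs <;> omega

theorem adj_inl_inl {i j : Fin k} : (completeSun k).Adj (.inl i) (.inl j) ↔ i ≠ j := Iff.rfl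

theorem adj_inl_inr {i j : Fin k} :
    (completeSun k).Adj (.inl i) (.inr j) ↔ i = j ∨ i = succMod j := by
  simp only [completeSun, succMod, Fin.ext_iff]

theorem not_adj_inr_inr {i j : Fin k} : ¬ (completeSun k).Adj (.inr i) (.inr j) := id

theorem not_adj_inl_inr_succMod (hk : 3 ≤ k) (j : Fin k) :
    ¬ (completeSun k).Adj (.inl j) (.inr (succMod j)) := by
  rw [adj_inl_inr]
  rintro (h | h)
  · exact succMod_ne (by omega) j h.symm
  · rw [Fin.ext_iff, val_succMod, val_succMod] at h
    split_ifs at h <;> omega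

theorem not_isModule_induce_compl (hk : 3 ≤ k) (v : Fin k ⊕ Fin k) :
    ¬ ((completeSun k).induce {v}ᶜ).IsModule {w | (completeSun k).Adj v w} := by
  intro h
  rcases v with j | j
  · have key := h.adj_iff_of_induce_compl (a := .inl (succMod j)) (b := .inr j)
      (c := .inr (succMod j)) Sum.inr_ne_inl
      (adj_inl_inl.mpr (succMod_ne (by omega) j).symm) (adj_inl_inr.mpr (.inl rfl))
      (not_adj_inl_inr_succMod hk j)
    exact not_adj_inr_inr (key.mp (adj_inl_inr.mpr (.inl rfl)))
  · have key := h.adj_iff_of_induce_compl (a := .inl (succMod j)) (b := .inl j)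
      (c := .inr (succMod j)) (by simpa using succMod_ne (by omega) j)
      ((completeSun k).adj_symm (adj_inl_inr.mpr (.inr rfl)))
      ((completeSun k).adj_symm (adj_inl_inr.mpr (.inl rfl))) not_adj_inr_inr
    exact not_adj_inl_inr_succMod hk j (key.mp (adj_inl_inr.mpr (.inl rfl)))

end completeSun

/-- No complete `k`-sun with `k ≥ 3` is module-composed. -/
theorem completeSun_not_moduleComposed (k : ℕ) (hk : 3 ≤ k) :
    ¬ (completeSun k).ModuleComposed := fun h =>
  have ⟨v, hv⟩ := h.exists_isModule_induce_compl <| by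
    simp only [Fintype.card_sum, Fintype.card_fin]; omega
  completeSun.not_isModule_induce_compl hk v hv
end
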